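/- For every finite group G, lim_{r→∞} |Comm_r(G)|^{1/r} = m(G), the maximum order of an abelian subgroup of G. Equivalently, lim_{r→∞} P_r(G)^{1/r} = m(G)/|G|. -/

import Mathlib

/-- The set of `r`-tuples of pairwise commuting elements of `G`. -/
def CommTuple (r : ℕ) (G : Type*) [Group G] : Type _ :=
  {x : Fin r → G // ∀ i j, Commute (x i) (x j)}

/-- `P r G = |Comm_r(G)| / |G|^r`. -/
noncomputable def P (r : ℕ) (G : Type*) [Group G] : ℝ :=
  (Nat.card (CommTuple r G) : ℝ) / (Nat.card G : ℝ) ^ r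

/-- A subgroup is abelian if all its elements commute. -/
def IsAbelianSubgroup {G : Type*} [Group G] (A : Subgroup G) : Prop :=
  ∀ x y : A, x * y = y * x

/-- `mG G`: maximum order of an abelian subgroup of `G`. -/
noncomputable def mG (G : Type*) [Group G] : ℕ :=
  sSup {n : ℕ | ∃ A : Subgroup G, IsAbelianSubgroup A ∧ Nat.card A = n}

/-- `Nmax G`: number of abelian subgroups of maximum order. -/
noncomputable def Nmax (G : Type*) [Group G] : ℕ :=
  Nat.card {A : Subgroup G // IsAbelianSubgroup A ∧ Nat.card A = mG G}

/-- `bG G`: second-largest order of an abelian subgroup. -/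
noncomputable def bG (G : Type*) [Group G] : ℕ :=
  sSup {n : ℕ | ∃ A : Subgroup G, IsAbelianSubgroup A ∧ Nat.card A = n ∧ n < mG G}

/-!
Every commuting tuple generates an abelian subgroup, so `Comm_r(G)` is the union over the abelian
subgroups `A` of the sets `A^r`. Hence `m(G)^r ≤ |Comm_r(G)| ≤ N · m(G)^r`, where `N` is the number
of abelian subgroups, and `N^(1/r) → 1`.
-/

open Filter Topology Real

instance (r : ℕ) (G : Type*) [Group G] [Finite G] : Finite (CommTuple r G) :=
  inferInstanceAs (Finite {x : Fin r → G // ∀ i j, Commute (x i) (x j)})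

lemma tendsto_rpow_inv_of_pow_le_of_le_mul_pow {a : ℕ → ℝ} {m C : ℝ} (hm : 0 ≤ m) (hC : 0 < C)
    (hlow : ∀ r, m ^ r ≤ a r) (hhigh : ∀ r, a r ≤ C * m ^ r) :
    Tendsto (fun r : ℕ => a r ^ ((r : ℝ)⁻¹)) atTop (𝓝 m) := by
  have hC_lim : Tendsto (fun r : ℕ => C ^ ((r : ℝ)⁻¹) * m) atTop (𝓝 m) := by
    simpa using ((continuousAt_const_rpow hC.ne').tendsto.comp
      (tendsto_inv_atTop_zero.comp tendsto_natCast_atTop_atTop)).mul_const m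
  refine tendsto_of_tendsto_of_tendsto_of_le_of_le' tendsto_const_nhds hC_lim ?_ ?_
  · filter_upwards [eventually_ne_atTop 0] with r hr
    calc m = (m ^ r) ^ ((r : ℝ)⁻¹) := (pow_rpow_inv_natCast hm hr).symm
      _ ≤ a r ^ ((r : ℝ)⁻¹) := rpow_le_rpow (by positivity) (hlow r) (by positivity)
  · filter_upwards [eventually_ne_atTop 0] with r hr
    calc a r ^ ((r : ℝ)⁻¹) ≤ (C * m ^ r) ^ ((r : ℝ)⁻¹) :=
          rpow_le_rpow ((pow_nonneg hm r).trans (hlow r)) (hhigh r) (by positivity)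
      _ = C ^ ((r : ℝ)⁻¹) * m := by
          rw [mul_rpow hC.le (by positivity), pow_rpow_inv_natCast hm hr]

section AbelianSubgroups

variable {G : Type*} [Group G]

lemma isAbelianSubgroup_bot : IsAbelianSubgroup (⊥ : Subgroup G) :=
  fun _ _ => Subsingleton.elim _ _

lemma isAbelianSubgroup_closure_range {r : ℕ} (x : CommTuple r G) :
    IsAbelianSubgroup (Subgroup.closure (Set.range x.1)) := by
  have hcomm : ∀ a ∈ Set.range x.1, ∀ b ∈ Set.range x.1, a * b = b * a := by
    rintro _ ⟨i, rfl⟩ _ ⟨j, rfl⟩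
    exact x.2 i j
  exact (Subgroup.isMulCommutative_closure hcomm).is_comm.comm

def CommTuple.ofAbelian {r : ℕ} {A : Subgroup G} (hA : IsAbelianSubgroup A) (x : Fin r → A) :
    CommTuple r G :=
  ⟨fun i => x i, fun i j => congrArg Subtype.val (hA (x i) (x j))⟩

lemma CommTuple.ofAbelian_injective {r : ℕ} {A : Subgroup G} (hA : IsAbelianSubgroup A) :
    Function.Injective (CommTuple.ofAbelian (r := r) hA) :=
  fun _ _ h => funext fun i => Subtype.ext (congrFun (congrArg Subtype.val h) i)

lemma CommTuple.exists_ofAbelian {r : ℕ} (x : CommTuple r G) :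
    ∃ (A : Subgroup G) (hA : IsAbelianSubgroup A) (y : Fin r → A), CommTuple.ofAbelian hA y = x :=
  ⟨_, isAbelianSubgroup_closure_range x,
    fun i => ⟨x.1 i, Subgroup.subset_closure ⟨i, rfl⟩⟩, rfl⟩

variable [Finite G]

lemma bddAbove_card_isAbelianSubgroup :
    BddAbove {n : ℕ | ∃ A : Subgroup G, IsAbelianSubgroup A ∧ Nat.card A = n} :=
  ⟨Nat.card G, fun _ ⟨A, _, hA⟩ => hA ▸ A.card_le_card_group⟩

lemma card_le_mG {A : Subgroup G} (hA : IsAbelianSubgroup A) : Nat.card A ≤ mG G :=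
  le_csSup bddAbove_card_isAbelianSubgroup ⟨A, hA, rfl⟩

lemma exists_isAbelianSubgroup_card_eq_mG :
    ∃ A : Subgroup G, IsAbelianSubgroup A ∧ Nat.card A = mG G :=
  Nat.sSup_mem (s := {n | ∃ A : Subgroup G, IsAbelianSubgroup A ∧ Nat.card A = n})
    ⟨1, ⊥, isAbelianSubgroup_bot, Subgroup.card_bot⟩ bddAbove_card_isAbelianSubgroup

lemma pow_mG_le_card_commTuple (r : ℕ) : mG G ^ r ≤ Nat.card (CommTuple r G) := by
  obtain ⟨A, hA, hcard⟩ := exists_isAbelianSubgroup_card_eq_mG (G := G)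
  calc mG G ^ r = Nat.card (Fin r → A) := by rw [Nat.card_fun, Nat.card_fin, hcard]
    _ ≤ Nat.card (CommTuple r G) :=
        Nat.card_le_card_of_injective _ (CommTuple.ofAbelian_injective hA)

lemma card_commTuple_le (r : ℕ) :
    Nat.card (CommTuple r G) ≤ Nat.card {A : Subgroup G // IsAbelianSubgroup A} * mG G ^ r := by
  let _ : Fintype {A : Subgroup G // IsAbelianSubgroup A} := Fintype.ofFinite _
  have hsurj : Function.Surjective
      (fun p : Σ A : {A : Subgroup G // IsAbelianSubgroup A}, Fin r → A.1 =>
        CommTuple.ofAbelian p.1.2 p.2) := by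
    intro x
    obtain ⟨A, hA, y, rfl⟩ := x.exists_ofAbelian
    exact ⟨⟨⟨A, hA⟩, y⟩, rfl⟩
  calc Nat.card (CommTuple r G)
      ≤ Nat.card (Σ A : {A : Subgroup G // IsAbelianSubgroup A}, Fin r → A.1) :=
        Nat.card_le_card_of_surjective _ hsurj
    _ = ∑ A : {A : Subgroup G // IsAbelianSubgroup A}, Nat.card A.1 ^ r := by
        simp only [Nat.card_sigma, Nat.card_fun, Nat.card_fin]
    _ ≤ ∑ _A : {A : Subgroup G // IsAbelianSubgroup A}, mG G ^ r :=
        Finset.sum_le_sum fun A _ => Nat.pow_le_pow_left (card_le_mG A.2) r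
    _ = _ := by simp [Nat.card_eq_fintype_card]

end AbelianSubgroups

theorem stmt10 (G : Type*) [Group G] [Fintype G] :
    Filter.Tendsto
        (fun r : ℕ => (Nat.card (CommTuple r G) : ℝ) ^ ((r : ℝ)⁻¹))
        Filter.atTop (nhds (mG G : ℝ)) ∧
      Filter.Tendsto (fun r : ℕ => P r G ^ ((r : ℝ)⁻¹))
        Filter.atTop (nhds ((mG G : ℝ) / (Nat.card G : ℝ))) := by
  have : Nonempty {A : Subgroup G // IsAbelianSubgroup A} := ⟨⟨⊥, isAbelianSubgroup_bot⟩⟩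
  set N := Nat.card {A : Subgroup G // IsAbelianSubgroup A}
  have hN : (0 : ℝ) < N := by exact_mod_cast Nat.card_pos
  have hG : (0 : ℝ) < Nat.card G := by exact_mod_cast Nat.card_pos
  have hm : (0 : ℝ) ≤ mG G := Nat.cast_nonneg _
  have hlow (r : ℕ) : (mG G : ℝ) ^ r ≤ Nat.card (CommTuple r G) := by
    exact_mod_cast pow_mG_le_card_commTuple r
  have hhigh (r : ℕ) : (Nat.card (CommTuple r G) : ℝ) ≤ N * (mG G : ℝ) ^ r := by
    exact_mod_cast card_commTuple_le r
  refine ⟨tendsto_rpow_inv_of_pow_le_of_le_mul_pow hm hN hlow hhigh,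
    tendsto_rpow_inv_of_pow_le_of_le_mul_pow (div_nonneg hm hG.le) hN (fun r => ?_) (fun r => ?_)⟩
  · rw [P, div_pow]
    exact div_le_div_of_nonneg_right (hlow r) (by positivity)
  · rw [P, div_pow, ← mul_div_assoc]
    exact div_le_div_of_nonneg_right (hhigh r) (by positivity)
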